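/- arXiv:2502.06840 — 2 statements merged into one kernel-verified Lean document; each statement's English description precedes it below -/
import Mathlib

section
/- Ampère's law from variations of the vector potential (Theorem 2.2). Let Ω ⊆ ℝ³ be open, T > 0, q ∈ ℝ, ε₀ > 0, μ₀ > 0. Let u : (0,T) × Ω → ℝ³, n, φ : (0,T) × Ω → ℝ and A : (0,T) × Ω → ℝ³ be smooth. Assume that for every smooth vector field a : (0,T) × Ω → ℝ³ with compact support in (0,T) × Ω one has ∫∫ [ q n u·a + ε₀ (∇φ + ∂_t A)·∂_t a − (1/μ₀) (∇×A)·(∇×a) ] dx dt = 0. Then on (0,T) × Ω: ε₀ ∂_t E = (1/μ₀) ∇×B − q n u, where E := −∂_t A − ∇φ and B := ∇×A. -/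
open MeasureTheory

noncomputable section

abbrev V3 := Fin 3 → ℝ

/-- Partial derivative in the `i`-th spatial direction. -/
def pd (i : Fin 3) (f : V3 → ℝ) (x : V3) : ℝ := fderiv ℝ f x (Pi.single i 1)

/-- Gradient of a scalar field on `ℝ³`. -/
def grad3 (f : V3 → ℝ) (x : V3) : V3 := fun i => pd i f x

/-- Divergence of a vector field on `ℝ³`. -/
def div3 (w : V3 → V3) (x : V3) : ℝ := ∑ i, pd i (fun y => w y i) x

/-- Curl of a vector field on `ℝ³`. -/
def curl3 (A : V3 → V3) (x : V3) : V3 :=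
  ![pd 1 (fun y => A y 2) x - pd 2 (fun y => A y 1) x,
    pd 2 (fun y => A y 0) x - pd 0 (fun y => A y 2) x,
    pd 0 (fun y => A y 1) x - pd 1 (fun y => A y 0) x]

/-- Jacobian of a vector field applied to a vector: `(v·∇)A` when `v` is the direction. -/
def jac (A : V3 → V3) (x v : V3) : V3 := fun i => fderiv ℝ (fun y => A y i) x v

/-- Transpose of the Jacobian of `u` applied to a vector `a`. -/
def jacT (u : V3 → V3) (x a : V3) : V3 := fun j => ∑ i, pd j (fun y => u y i) x * a i

/-- Euclidean dot product on `ℝ³`. -/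
def dot3 (a b : V3) : ℝ := ∑ i, a i * b i

/-- Lie bracket of vector fields `[u,v] = (u·∇)v − (v·∇)u`. -/
def lie3 (u v : V3 → V3) (x : V3) : V3 := jac v x (u x) - jac u x (v x)

/-- Partial time derivative of a time-dependent field. -/
def dt {E : Type*} [NormedAddCommGroup E] [NormedSpace ℝ E]
    (f : ℝ × V3 → E) (p : ℝ × V3) : E := deriv (fun τ => f (τ, p.2)) p.1

/-- Partial derivative of `e = e(n,s)` in its first argument. -/
def e1 (e : ℝ × ℝ → ℝ) (a b : ℝ) : ℝ := fderiv ℝ e (a, b) (1, 0)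

/-- Partial derivative of `e = e(n,s)` in its second argument. -/
def e2 (e : ℝ × ℝ → ℝ) (a b : ℝ) : ℝ := fderiv ℝ e (a, b) (0, 1)

section AuxAmpere

open Function

abbrev E4 := ℝ × V3

instance : (volume : Measure E4).IsAddHaarMeasure :=
  MeasureTheory.Measure.prod.instIsAddHaarMeasure _ _

lemma hone' : ((⊤:ℕ∞) : WithTop ℕ∞) ≠ 0 := by simp

def Dv (v : E4) (g : E4 → ℝ) (p : E4) : ℝ := fderiv ℝ g p v

def etd : E4 := ((1:ℝ), (0:V3))

def exd (i : Fin 3) : E4 := ((0:ℝ), Pi.single i 1)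

lemma contDiff_Dv {g : E4 → ℝ} (hg : ContDiff ℝ (⊤:ℕ∞) g) (v : E4) :
    ContDiff ℝ (⊤:ℕ∞) (Dv v g) :=
  (hg.fderiv_right (m := (⊤:ℕ∞)) (by exact_mod_cast le_top)).clm_apply contDiff_const

lemma Dv_neg (g : E4 → ℝ) (v p : E4) : Dv v (fun q => -(g q)) p = -(Dv v g p) := by
  simp [Dv, fderiv_neg]

lemma Dv_mul {g h : E4 → ℝ} (hg : ContDiff ℝ (⊤:ℕ∞) g) (hh : ContDiff ℝ (⊤:ℕ∞) h) (v p : E4) :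
    Dv v (fun q => g q * h q) p = Dv v g p * h p + g p * Dv v h p := by
  rw [Dv, fderiv_fun_mul ((hg.differentiable hone').differentiableAt)
    ((hh.differentiable hone').differentiableAt)]
  simp [Dv]; ring

lemma dt_eq_Dv (f : E4 → V3) (hf : ContDiff ℝ (⊤:ℕ∞) f) (p : E4) (i : Fin 3) :
    dt f p i = Dv etd (fun q => f q i) p := by
  have h1 : HasDerivAt (fun τ : ℝ => ((τ, p.2) : E4)) etd p.1 :=
    (hasDerivAt_id p.1).prodMk (hasDerivAt_const _ _)
  have h2 : HasDerivAt (fun τ => f (τ, p.2)) (fderiv ℝ f p etd) p.1 := by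
    have := ((hf.differentiable hone' (p.1, p.2)).hasFDerivAt).comp_hasDerivAt p.1 h1
    exact this
  have h3 : HasFDerivAt (fun q => f q i)
      ((ContinuousLinearMap.proj i).comp (fderiv ℝ f p)) p := by
    have := (ContinuousLinearMap.proj (R := ℝ) (φ := fun _ : Fin 3 => ℝ) i).hasFDerivAt.comp p
      (hf.differentiable hone' p).hasFDerivAt
    exact this
  rw [dt, h2.deriv, Dv, h3.fderiv]
  rfl

lemma pd_slice (f : E4 → ℝ) (hf : ContDiff ℝ (⊤:ℕ∞) f) (p : E4) (i : Fin 3) :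
    pd i (fun y => f (p.1, y)) p.2 = Dv (exd i) f p := by
  have h1 : HasFDerivAt (fun y : V3 => ((p.1, y) : E4))
      ((0 : V3 →L[ℝ] ℝ).prod (ContinuousLinearMap.id ℝ V3)) p.2 :=
    (hasFDerivAt_const _ _).prodMk (hasFDerivAt_id _)
  have h2 : HasFDerivAt (fun y : V3 => f (p.1, y))
      ((fderiv ℝ f p).comp ((0 : V3 →L[ℝ] ℝ).prod (ContinuousLinearMap.id ℝ V3))) p.2 := by
    have := ((hf.differentiable hone' (p.1, p.2)).hasFDerivAt).comp p.2 h1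
    exact this
  rw [pd, h2.fderiv, Dv]
  rfl

lemma curl3_slice (f : E4 → V3) (hf : ContDiff ℝ (⊤:ℕ∞) f) (r : E4) :
    curl3 (fun y => f (r.1, y)) r.2 =
      ![Dv (exd 1) (fun s => f s 2) r - Dv (exd 2) (fun s => f s 1) r,
        Dv (exd 2) (fun s => f s 0) r - Dv (exd 0) (fun s => f s 2) r,
        Dv (exd 0) (fun s => f s 1) r - Dv (exd 1) (fun s => f s 0) r] := by
  unfold curl3
  have h : ∀ (i j : Fin 3), pd i (fun y => f (r.1, y) j) r.2 = Dv (exd i) (fun s => f s j) r :=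
    fun i j => pd_slice (fun s => f s j) (contDiff_pi.mp hf j) r i
  simp only [h]

lemma fderiv_zero_of_not_mem_tsupport {h : E4 → ℝ} {x : E4} (hx : x ∉ tsupport h) :
    fderiv ℝ h x = 0 := by
  have : h =ᶠ[nhds x] (fun _ => 0) := by
    filter_upwards [(isClosed_tsupport h).isOpen_compl.mem_nhds hx] with y hy
    exact image_eq_zero_of_notMem_tsupport hy
  rw [this.fderiv_eq, fderiv_fun_const]; rfl

lemma ibp0 {h : E4 → ℝ} (hh : ContDiff ℝ (⊤:ℕ∞) h) (hs : HasCompactSupport h) (v : E4) :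
    ∫ x, fderiv ℝ h x v = 0 := by
  obtain ⟨R, hR0, hRs⟩ : ∃ R, 0 < R ∧ tsupport h ⊆ Metric.ball 0 R := by
    obtain ⟨R, hR⟩ := hs.isBounded.subset_ball 0
    exact ⟨max R 1, lt_of_lt_of_le one_pos (le_max_right _ _),
      hR.trans (Metric.ball_subset_ball (le_max_left _ _))⟩
  set χ : ContDiffBump (0 : E4) := ⟨R, R + 1, hR0, by linarith⟩ with hχ
  obtain ⟨C1, hlip_h⟩ := hh.lipschitzWith_of_hasCompactSupport hs (by simp)
  obtain ⟨C2, hlip_χ⟩ := (χ.contDiff (n := (⊤:ℕ∞))).lipschitzWith_of_hasCompactSupport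
    χ.hasCompactSupport (by simp)
  have key := LipschitzWith.integral_lineDeriv_mul_eq (μ := volume) hlip_h hlip_χ
    χ.hasCompactSupport v
  have hL : ∀ x, lineDeriv ℝ h x v * χ x = fderiv ℝ h x v := by
    intro x
    by_cases hx : x ∈ tsupport h
    · rw [(hh.differentiable hone' x).lineDeriv_eq_fderiv]
      have : χ x = 1 := χ.one_of_mem_closedBall (by
        simpa using Metric.ball_subset_closedBall (hRs hx))
      rw [this, mul_one]
    · rw [fderiv_zero_of_not_mem_tsupport hx,
        (hh.differentiable hone' x).lineDeriv_eq_fderiv,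
        fderiv_zero_of_not_mem_tsupport hx]
      simp
  have hR' : ∀ x, lineDeriv ℝ (χ : E4 → ℝ) x (-v) * h x = 0 := by
    intro x
    by_cases hx : x ∈ tsupport h
    · have hmem : Metric.ball (0:E4) R ∈ nhds x := Metric.isOpen_ball.mem_nhds (hRs hx)
      have : (χ : E4 → ℝ) =ᶠ[nhds x] (fun _ => 1) := by
        filter_upwards [hmem] with y hy
        exact χ.one_of_mem_closedBall (by simpa using Metric.ball_subset_closedBall hy)
      rw [(((χ.contDiff (n := 1)).differentiable one_ne_zero).differentiableAt).lineDeriv_eq_fderiv,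
        this.fderiv_eq, fderiv_fun_const]
      simp
    · rw [image_eq_zero_of_notMem_tsupport hx, mul_zero]
  simp only [hL] at key
  simp only [hR'] at key
  simpa using key

lemma hcs_Dv {h : E4 → ℝ} (hs : HasCompactSupport h) (v : E4) :
    HasCompactSupport (Dv v h) := by
  apply hs.mono'
  intro x hx
  by_contra hxt
  apply hx
  show Dv v h x = 0
  rw [Dv, fderiv_zero_of_not_mem_tsupport hxt]; rfl

lemma ibp_set {U : Set E4} {g h : E4 → ℝ} (hg : ContDiff ℝ (⊤:ℕ∞) g)
    (hh : ContDiff ℝ (⊤:ℕ∞) h) (hs : HasCompactSupport h) (hsub : tsupport h ⊆ U) (v : E4) :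
    ∫ x in U, Dv v (fun s => g s * h s) x = 0 := by
  have hts : tsupport (fun s => g s * h s) ⊆ U :=
    (closure_mono (Function.support_mul_subset_right g h)).trans hsub
  rw [setIntegral_eq_integral_of_forall_compl_eq_zero (fun x hx => by
    rw [Dv, fderiv_zero_of_not_mem_tsupport (fun hmem => hx (hts hmem))]; rfl)]
  exact ibp0 (hg.mul hh) (hs.mul_left) v

lemma integrableOn_Dv_mul {g h : E4 → ℝ} (hg : ContDiff ℝ (⊤:ℕ∞) g)
    (hh : ContDiff ℝ (⊤:ℕ∞) h) (hs : HasCompactSupport h) (v : E4) (U : Set E4) :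
    IntegrableOn (fun r => Dv v (fun s => g s * h s) r) U volume :=
  (((contDiff_Dv (hg.mul hh) v).continuous).integrable_of_hasCompactSupport
    (hcs_Dv hs.mul_left v)).integrableOn

end AuxAmpere


set_option maxHeartbeats 1000000 in
/-- Ampère's law from variations of the vector potential. -/
theorem ampere_law_from_variations
    (Ω : Set V3) (hΩ : IsOpen Ω) (T : ℝ) (hT : 0 < T) (q ε₀ μ₀ : ℝ)
    (hε : 0 < ε₀) (hμ : 0 < μ₀)
    (u A : ℝ × V3 → V3) (n φ : ℝ × V3 → ℝ)
    (hu : ContDiff ℝ (⊤ : ℕ∞) u) (hA : ContDiff ℝ (⊤ : ℕ∞) A)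
    (hn : ContDiff ℝ (⊤ : ℕ∞) n) (hφ : ContDiff ℝ (⊤ : ℕ∞) φ)
    (hvar : ∀ a : ℝ × V3 → V3, ContDiff ℝ (⊤ : ℕ∞) a → HasCompactSupport a →
      tsupport a ⊆ Set.Ioo 0 T ×ˢ Ω →
      (∫ p in Set.Ioo 0 T ×ˢ Ω,
        (q * n p * dot3 (u p) (a p)
          + ε₀ * dot3 (grad3 (fun y => φ (p.1, y)) p.2 + dt A p) (dt a p)
          - (1 / μ₀) * dot3 (curl3 (fun y => A (p.1, y)) p.2)
              (curl3 (fun y => a (p.1, y)) p.2))) = 0)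
    (E B : ℝ × V3 → V3)
    (hE : ∀ p : ℝ × V3, E p = -dt A p - grad3 (fun y => φ (p.1, y)) p.2)
    (hB : ∀ p : ℝ × V3, B p = curl3 (fun y => A (p.1, y)) p.2) :
    ∀ p ∈ Set.Ioo 0 T ×ˢ Ω,
      ε₀ • dt E p
        = (1 / μ₀) • curl3 (fun y => B (p.1, y)) p.2 - (q * n p) • u p := by

  classical
  set U : Set E4 := Set.Ioo 0 T ×ˢ Ω with hUdef
  have hUo : IsOpen U := isOpen_Ioo.prod hΩ
  have hA' : ∀ i, ContDiff ℝ (⊤:ℕ∞) (fun r => A r i) := fun i => contDiff_pi.mp hA i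
  have hu' : ∀ i, ContDiff ℝ (⊤:ℕ∞) (fun r => u r i) := fun i => contDiff_pi.mp hu i
  set G : Fin 3 → E4 → ℝ := fun i r => Dv (exd i) φ r + Dv etd (fun s => A s i) r with hGdef
  set C : Fin 3 → E4 → ℝ :=
    ![fun r => Dv (exd 1) (fun s => A s 2) r - Dv (exd 2) (fun s => A s 1) r,
      fun r => Dv (exd 2) (fun s => A s 0) r - Dv (exd 0) (fun s => A s 2) r,
      fun r => Dv (exd 0) (fun s => A s 1) r - Dv (exd 1) (fun s => A s 0) r] with hCdef
  have hGs : ∀ i, ContDiff ℝ (⊤:ℕ∞) (G i) := fun i =>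
    (contDiff_Dv hφ _).add (contDiff_Dv (hA' i) _)
  have hCs : ∀ k, ContDiff ℝ (⊤:ℕ∞) (C k) := by
    intro k
    fin_cases k <;>
      simp only [hCdef, Matrix.cons_val_zero, Matrix.cons_val_one, Matrix.head_cons,
        Matrix.cons_val_two, Matrix.tail_cons] <;>
      exact (contDiff_Dv (hA' _) _).sub (contDiff_Dv (hA' _) _)
  have hGapp : ∀ (r : E4) (i : Fin 3),
      (grad3 (fun y => φ (r.1, y)) r.2 + dt A r) i = G i r := by
    intro r i
    simp only [Pi.add_apply]
    rw [show grad3 (fun y => φ (r.1, y)) r.2 i = pd i (fun y => φ (r.1, y)) r.2 from rfl,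
      pd_slice φ hφ r i, dt_eq_Dv A hA r i]
  have hcurlA : ∀ r : E4, curl3 (fun y => A (r.1, y)) r.2 = fun k => C k r := by
    intro r
    rw [curl3_slice A hA r]
    funext k
    fin_cases k <;> simp [hCdef]
  have hGE : ∀ r i, E r i = -G i r := by
    intro r i
    rw [hE r]
    simp only [Pi.sub_apply, Pi.neg_apply]
    rw [dt_eq_Dv A hA r i,
      show grad3 (fun y => φ (r.1, y)) r.2 i = pd i (fun y => φ (r.1, y)) r.2 from rfl,
      pd_slice φ hφ r i]
    simp [hGdef]; ring
  have hEs : ContDiff ℝ (⊤:ℕ∞) E := by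
    have hEfun : E = fun r => fun i => -G i r := funext fun r => funext fun i => hGE r i
    rw [hEfun]
    exact contDiff_pi.mpr fun i => (hGs i).neg
  have hBC : ∀ (r : E4) (k : Fin 3), B r k = C k r := by
    intro r k
    rw [hB r, hcurlA r]
  have hBs : ContDiff ℝ (⊤:ℕ∞) B := by
    have : B = fun r => fun k => C k r := funext fun r => funext fun k => hBC r k
    rw [this]
    exact contDiff_pi.mpr fun k => hCs k
  have hBk : ∀ k, (fun s => B s k) = C k := fun k => funext fun s => hBC s k
  have hcurlB : ∀ r : E4, curl3 (fun y => B (r.1, y)) r.2 =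
      ![Dv (exd 1) (C 2) r - Dv (exd 2) (C 1) r,
        Dv (exd 2) (C 0) r - Dv (exd 0) (C 2) r,
        Dv (exd 0) (C 1) r - Dv (exd 1) (C 0) r] := by
    intro r
    rw [curl3_slice B hBs r, hBk 0, hBk 1, hBk 2]
  have hdtE : ∀ (r : E4) (i : Fin 3), dt E r i = -(Dv etd (G i) r) := by
    intro r i
    rw [dt_eq_Dv E hEs r i,
      show (fun s => E s i) = fun s => -(G i s) from funext fun s => hGE s i, Dv_neg]
  set w : E4 → V3 := fun r =>
    ε₀ • dt E r - ((1/μ₀) • curl3 (fun y => B (r.1, y)) r.2 - (q * n r) • u r) with hwdef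
  have hwv : ∀ (r : E4) (i : Fin 3), w r i =
      ε₀ * dt E r i - ((1/μ₀) * curl3 (fun y => B (r.1, y)) r.2 i - q * n r * u r i) := by
    intro r i
    rw [hwdef]
    simp [mul_assoc]
  have hC' : ∀ (j k : Fin 3), Continuous fun r => Dv (exd j) (C k) r :=
    fun j k => (contDiff_Dv (hCs k) _).continuous
  have hwc : Continuous w := by
    refine continuous_pi fun i => ?_
    have hrep : (fun r => w r i) = fun r =>
        ε₀ * (-(Dv etd (G i) r)) -
          ((1/μ₀) * curl3 (fun y => B (r.1, y)) r.2 i - q * n r * u r i) := by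
      funext r; rw [hwv r i, hdtE r i]
    rw [hrep]
    have h1 : Continuous fun r => Dv etd (G i) r := (contDiff_Dv (hGs i) _).continuous
    have h2 : Continuous fun r : E4 => curl3 (fun y => B (r.1, y)) r.2 i := by
      fin_cases i <;>
        simp only [hcurlB, Matrix.cons_val_zero, Matrix.cons_val_one, Matrix.head_cons,
          Matrix.cons_val_two, Matrix.tail_cons] <;>
        exact (hC' _ _).sub (hC' _ _)
    exact (continuous_const.mul h1.neg).sub ((continuous_const.mul h2).sub
      ((continuous_const.mul hn.continuous).mul ((continuous_apply i).comp hu.continuous)))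
  have key : ∀ a : E4 → V3, ContDiff ℝ (⊤:ℕ∞) a → HasCompactSupport a →
      tsupport a ⊆ U → ∫ r in U, dot3 (w r) (a r) = 0 := by
    intro a ha hca hta
    have hbs : ∀ i, ContDiff ℝ (⊤:ℕ∞) (fun s => a s i) := fun i => contDiff_pi.mp ha i
    have hbc : ∀ i : Fin 3, HasCompactSupport (fun s => a s i) := fun i =>
      hca.comp_left (g := fun v : V3 => v i) rfl
    have hbt : ∀ i : Fin 3, tsupport (fun s => a s i) ⊆ U := by
      intro i
      refine (closure_mono ?_).trans hta
      intro r hr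
      simp only [Function.mem_support] at hr ⊢
      exact fun h0 => hr (by rw [h0]; rfl)
    have hdot_ca : Continuous fun r => dot3 (w r) (a r) := by
      simp only [dot3]
      exact continuous_finset_sum _ fun i _ =>
        ((continuous_apply i).comp hwc).mul ((continuous_apply i).comp ha.continuous)
    have hdot_cs : HasCompactSupport fun r => dot3 (w r) (a r) := by
      apply hca.mono'
      intro r hr
      by_contra hrt
      apply hr
      have h0 : a r = 0 := image_eq_zero_of_notMem_tsupport hrt
      simp [dot3, h0]
    have hwaInt : IntegrableOn (fun r => dot3 (w r) (a r)) U volume :=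
      (hdot_ca.integrable_of_hasCompactSupport hdot_cs).integrableOn
    have hterm : ∀ (c : ℝ) (v : E4) (g : E4 → ℝ), ContDiff ℝ (⊤:ℕ∞) g → ∀ j : Fin 3,
        IntegrableOn (fun r => c * Dv v (fun s => g s * a s j) r) U volume :=
      fun c v g hg j => (integrableOn_Dv_mul hg (hbs j) (hbc j) v U).const_mul c
    have hterm0 : ∀ (c : ℝ) (v : E4) (g : E4 → ℝ), ContDiff ℝ (⊤:ℕ∞) g → ∀ j : Fin 3,
        ∫ r in U, c * Dv v (fun s => g s * a s j) r = 0 := by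
      intro c v g hg j
      rw [MeasureTheory.integral_const_mul, ibp_set hg (hbs j) (hbc j) (hbt j) v, mul_zero]
    have i0 : IntegrableOn (fun r => ε₀ * Dv (etd) (fun s => G 0 s * a s 0) r) U volume := hterm _ _ _ (hGs 0) 0
    have z0 : ∫ r in U, ε₀ * Dv (etd) (fun s => G 0 s * a s 0) r = 0 := hterm0 _ _ _ (hGs 0) 0
    have i1 : IntegrableOn (fun r => ε₀ * Dv (etd) (fun s => G 1 s * a s 1) r) U volume := hterm _ _ _ (hGs 1) 1
    have z1 : ∫ r in U, ε₀ * Dv (etd) (fun s => G 1 s * a s 1) r = 0 := hterm0 _ _ _ (hGs 1) 1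
    have i2 : IntegrableOn (fun r => ε₀ * Dv (etd) (fun s => G 2 s * a s 2) r) U volume := hterm _ _ _ (hGs 2) 2
    have z2 : ∫ r in U, ε₀ * Dv (etd) (fun s => G 2 s * a s 2) r = 0 := hterm0 _ _ _ (hGs 2) 2
    have i3 : IntegrableOn (fun r => -(1/μ₀) * Dv (exd 1) (fun s => C 0 s * a s 2) r) U volume := hterm _ _ _ (hCs 0) 2
    have z3 : ∫ r in U, -(1/μ₀) * Dv (exd 1) (fun s => C 0 s * a s 2) r = 0 := hterm0 _ _ _ (hCs 0) 2
    have i4 : IntegrableOn (fun r => (1/μ₀) * Dv (exd 2) (fun s => C 0 s * a s 1) r) U volume := hterm _ _ _ (hCs 0) 1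
    have z4 : ∫ r in U, (1/μ₀) * Dv (exd 2) (fun s => C 0 s * a s 1) r = 0 := hterm0 _ _ _ (hCs 0) 1
    have i5 : IntegrableOn (fun r => -(1/μ₀) * Dv (exd 2) (fun s => C 1 s * a s 0) r) U volume := hterm _ _ _ (hCs 1) 0
    have z5 : ∫ r in U, -(1/μ₀) * Dv (exd 2) (fun s => C 1 s * a s 0) r = 0 := hterm0 _ _ _ (hCs 1) 0
    have i6 : IntegrableOn (fun r => (1/μ₀) * Dv (exd 0) (fun s => C 1 s * a s 2) r) U volume := hterm _ _ _ (hCs 1) 2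
    have z6 : ∫ r in U, (1/μ₀) * Dv (exd 0) (fun s => C 1 s * a s 2) r = 0 := hterm0 _ _ _ (hCs 1) 2
    have i7 : IntegrableOn (fun r => -(1/μ₀) * Dv (exd 0) (fun s => C 2 s * a s 1) r) U volume := hterm _ _ _ (hCs 2) 1
    have z7 : ∫ r in U, -(1/μ₀) * Dv (exd 0) (fun s => C 2 s * a s 1) r = 0 := hterm0 _ _ _ (hCs 2) 1
    have i8 : IntegrableOn (fun r => (1/μ₀) * Dv (exd 1) (fun s => C 2 s * a s 0) r) U volume := hterm _ _ _ (hCs 2) 0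
    have z8 : ∫ r in U, (1/μ₀) * Dv (exd 1) (fun s => C 2 s * a s 0) r = 0 := hterm0 _ _ _ (hCs 2) 0
    have s1 : IntegrableOn (fun r => ε₀ * Dv (etd) (fun s => G 0 s * a s 0) r + ε₀ * Dv (etd) (fun s => G 1 s * a s 1) r) U volume := i0.add i1
    have s2 : IntegrableOn (fun r => ε₀ * Dv (etd) (fun s => G 0 s * a s 0) r + ε₀ * Dv (etd) (fun s => G 1 s * a s 1) r + ε₀ * Dv (etd) (fun s => G 2 s * a s 2) r) U volume := s1.add i2
    have s3 : IntegrableOn (fun r => ε₀ * Dv (etd) (fun s => G 0 s * a s 0) r + ε₀ * Dv (etd) (fun s => G 1 s * a s 1) r + ε₀ * Dv (etd) (fun s => G 2 s * a s 2) r + -(1/μ₀) * Dv (exd 1) (fun s => C 0 s * a s 2) r) U volume := s2.add i3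
    have s4 : IntegrableOn (fun r => ε₀ * Dv (etd) (fun s => G 0 s * a s 0) r + ε₀ * Dv (etd) (fun s => G 1 s * a s 1) r + ε₀ * Dv (etd) (fun s => G 2 s * a s 2) r + -(1/μ₀) * Dv (exd 1) (fun s => C 0 s * a s 2) r + (1/μ₀) * Dv (exd 2) (fun s => C 0 s * a s 1) r) U volume := s3.add i4
    have s5 : IntegrableOn (fun r => ε₀ * Dv (etd) (fun s => G 0 s * a s 0) r + ε₀ * Dv (etd) (fun s => G 1 s * a s 1) r + ε₀ * Dv (etd) (fun s => G 2 s * a s 2) r + -(1/μ₀) * Dv (exd 1) (fun s => C 0 s * a s 2) r + (1/μ₀) * Dv (exd 2) (fun s => C 0 s * a s 1) r + -(1/μ₀) * Dv (exd 2) (fun s => C 1 s * a s 0) r) U volume := s4.add i5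
    have s6 : IntegrableOn (fun r => ε₀ * Dv (etd) (fun s => G 0 s * a s 0) r + ε₀ * Dv (etd) (fun s => G 1 s * a s 1) r + ε₀ * Dv (etd) (fun s => G 2 s * a s 2) r + -(1/μ₀) * Dv (exd 1) (fun s => C 0 s * a s 2) r + (1/μ₀) * Dv (exd 2) (fun s => C 0 s * a s 1) r + -(1/μ₀) * Dv (exd 2) (fun s => C 1 s * a s 0) r + (1/μ₀) * Dv (exd 0) (fun s => C 1 s * a s 2) r) U volume := s5.add i6
    have s7 : IntegrableOn (fun r => ε₀ * Dv (etd) (fun s => G 0 s * a s 0) r + ε₀ * Dv (etd) (fun s => G 1 s * a s 1) r + ε₀ * Dv (etd) (fun s => G 2 s * a s 2) r + -(1/μ₀) * Dv (exd 1) (fun s => C 0 s * a s 2) r + (1/μ₀) * Dv (exd 2) (fun s => C 0 s * a s 1) r + -(1/μ₀) * Dv (exd 2) (fun s => C 1 s * a s 0) r + (1/μ₀) * Dv (exd 0) (fun s => C 1 s * a s 2) r + -(1/μ₀) * Dv (exd 0) (fun s => C 2 s * a s 1) r) U volume := s6.add i7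
    have s8 : IntegrableOn (fun r => ε₀ * Dv (etd) (fun s => G 0 s * a s 0) r + ε₀ * Dv (etd) (fun s => G 1 s * a s 1) r + ε₀ * Dv (etd) (fun s => G 2 s * a s 2) r + -(1/μ₀) * Dv (exd 1) (fun s => C 0 s * a s 2) r + (1/μ₀) * Dv (exd 2) (fun s => C 0 s * a s 1) r + -(1/μ₀) * Dv (exd 2) (fun s => C 1 s * a s 0) r + (1/μ₀) * Dv (exd 0) (fun s => C 1 s * a s 2) r + -(1/μ₀) * Dv (exd 0) (fun s => C 2 s * a s 1) r + (1/μ₀) * Dv (exd 1) (fun s => C 2 s * a s 0) r) U volume := s7.add i8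
    have e9 : ∫ r in U, (ε₀ * Dv (etd) (fun s => G 0 s * a s 0) r + ε₀ * Dv (etd) (fun s => G 1 s * a s 1) r + ε₀ * Dv (etd) (fun s => G 2 s * a s 2) r + -(1/μ₀) * Dv (exd 1) (fun s => C 0 s * a s 2) r + (1/μ₀) * Dv (exd 2) (fun s => C 0 s * a s 1) r + -(1/μ₀) * Dv (exd 2) (fun s => C 1 s * a s 0) r + (1/μ₀) * Dv (exd 0) (fun s => C 1 s * a s 2) r + -(1/μ₀) * Dv (exd 0) (fun s => C 2 s * a s 1) r + (1/μ₀) * Dv (exd 1) (fun s => C 2 s * a s 0) r + dot3 (w r) (a r))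
        = (∫ r in U, ε₀ * Dv (etd) (fun s => G 0 s * a s 0) r + ε₀ * Dv (etd) (fun s => G 1 s * a s 1) r + ε₀ * Dv (etd) (fun s => G 2 s * a s 2) r + -(1/μ₀) * Dv (exd 1) (fun s => C 0 s * a s 2) r + (1/μ₀) * Dv (exd 2) (fun s => C 0 s * a s 1) r + -(1/μ₀) * Dv (exd 2) (fun s => C 1 s * a s 0) r + (1/μ₀) * Dv (exd 0) (fun s => C 1 s * a s 2) r + -(1/μ₀) * Dv (exd 0) (fun s => C 2 s * a s 1) r + (1/μ₀) * Dv (exd 1) (fun s => C 2 s * a s 0) r) + ∫ r in U, dot3 (w r) (a r) :=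
      MeasureTheory.integral_add s8 hwaInt
    have e8 : ∫ r in U, (ε₀ * Dv (etd) (fun s => G 0 s * a s 0) r + ε₀ * Dv (etd) (fun s => G 1 s * a s 1) r + ε₀ * Dv (etd) (fun s => G 2 s * a s 2) r + -(1/μ₀) * Dv (exd 1) (fun s => C 0 s * a s 2) r + (1/μ₀) * Dv (exd 2) (fun s => C 0 s * a s 1) r + -(1/μ₀) * Dv (exd 2) (fun s => C 1 s * a s 0) r + (1/μ₀) * Dv (exd 0) (fun s => C 1 s * a s 2) r + -(1/μ₀) * Dv (exd 0) (fun s => C 2 s * a s 1) r + (1/μ₀) * Dv (exd 1) (fun s => C 2 s * a s 0) r)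
        = (∫ r in U, ε₀ * Dv (etd) (fun s => G 0 s * a s 0) r + ε₀ * Dv (etd) (fun s => G 1 s * a s 1) r + ε₀ * Dv (etd) (fun s => G 2 s * a s 2) r + -(1/μ₀) * Dv (exd 1) (fun s => C 0 s * a s 2) r + (1/μ₀) * Dv (exd 2) (fun s => C 0 s * a s 1) r + -(1/μ₀) * Dv (exd 2) (fun s => C 1 s * a s 0) r + (1/μ₀) * Dv (exd 0) (fun s => C 1 s * a s 2) r + -(1/μ₀) * Dv (exd 0) (fun s => C 2 s * a s 1) r) + ∫ r in U, (1/μ₀) * Dv (exd 1) (fun s => C 2 s * a s 0) r :=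
      MeasureTheory.integral_add s7 i8
    have e7 : ∫ r in U, (ε₀ * Dv (etd) (fun s => G 0 s * a s 0) r + ε₀ * Dv (etd) (fun s => G 1 s * a s 1) r + ε₀ * Dv (etd) (fun s => G 2 s * a s 2) r + -(1/μ₀) * Dv (exd 1) (fun s => C 0 s * a s 2) r + (1/μ₀) * Dv (exd 2) (fun s => C 0 s * a s 1) r + -(1/μ₀) * Dv (exd 2) (fun s => C 1 s * a s 0) r + (1/μ₀) * Dv (exd 0) (fun s => C 1 s * a s 2) r + -(1/μ₀) * Dv (exd 0) (fun s => C 2 s * a s 1) r)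
        = (∫ r in U, ε₀ * Dv (etd) (fun s => G 0 s * a s 0) r + ε₀ * Dv (etd) (fun s => G 1 s * a s 1) r + ε₀ * Dv (etd) (fun s => G 2 s * a s 2) r + -(1/μ₀) * Dv (exd 1) (fun s => C 0 s * a s 2) r + (1/μ₀) * Dv (exd 2) (fun s => C 0 s * a s 1) r + -(1/μ₀) * Dv (exd 2) (fun s => C 1 s * a s 0) r + (1/μ₀) * Dv (exd 0) (fun s => C 1 s * a s 2) r) + ∫ r in U, -(1/μ₀) * Dv (exd 0) (fun s => C 2 s * a s 1) r :=
      MeasureTheory.integral_add s6 i7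
    have e6 : ∫ r in U, (ε₀ * Dv (etd) (fun s => G 0 s * a s 0) r + ε₀ * Dv (etd) (fun s => G 1 s * a s 1) r + ε₀ * Dv (etd) (fun s => G 2 s * a s 2) r + -(1/μ₀) * Dv (exd 1) (fun s => C 0 s * a s 2) r + (1/μ₀) * Dv (exd 2) (fun s => C 0 s * a s 1) r + -(1/μ₀) * Dv (exd 2) (fun s => C 1 s * a s 0) r + (1/μ₀) * Dv (exd 0) (fun s => C 1 s * a s 2) r)
        = (∫ r in U, ε₀ * Dv (etd) (fun s => G 0 s * a s 0) r + ε₀ * Dv (etd) (fun s => G 1 s * a s 1) r + ε₀ * Dv (etd) (fun s => G 2 s * a s 2) r + -(1/μ₀) * Dv (exd 1) (fun s => C 0 s * a s 2) r + (1/μ₀) * Dv (exd 2) (fun s => C 0 s * a s 1) r + -(1/μ₀) * Dv (exd 2) (fun s => C 1 s * a s 0) r) + ∫ r in U, (1/μ₀) * Dv (exd 0) (fun s => C 1 s * a s 2) r :=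
      MeasureTheory.integral_add s5 i6
    have e5 : ∫ r in U, (ε₀ * Dv (etd) (fun s => G 0 s * a s 0) r + ε₀ * Dv (etd) (fun s => G 1 s * a s 1) r + ε₀ * Dv (etd) (fun s => G 2 s * a s 2) r + -(1/μ₀) * Dv (exd 1) (fun s => C 0 s * a s 2) r + (1/μ₀) * Dv (exd 2) (fun s => C 0 s * a s 1) r + -(1/μ₀) * Dv (exd 2) (fun s => C 1 s * a s 0) r)
        = (∫ r in U, ε₀ * Dv (etd) (fun s => G 0 s * a s 0) r + ε₀ * Dv (etd) (fun s => G 1 s * a s 1) r + ε₀ * Dv (etd) (fun s => G 2 s * a s 2) r + -(1/μ₀) * Dv (exd 1) (fun s => C 0 s * a s 2) r + (1/μ₀) * Dv (exd 2) (fun s => C 0 s * a s 1) r) + ∫ r in U, -(1/μ₀) * Dv (exd 2) (fun s => C 1 s * a s 0) r :=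
      MeasureTheory.integral_add s4 i5
    have e4 : ∫ r in U, (ε₀ * Dv (etd) (fun s => G 0 s * a s 0) r + ε₀ * Dv (etd) (fun s => G 1 s * a s 1) r + ε₀ * Dv (etd) (fun s => G 2 s * a s 2) r + -(1/μ₀) * Dv (exd 1) (fun s => C 0 s * a s 2) r + (1/μ₀) * Dv (exd 2) (fun s => C 0 s * a s 1) r)
        = (∫ r in U, ε₀ * Dv (etd) (fun s => G 0 s * a s 0) r + ε₀ * Dv (etd) (fun s => G 1 s * a s 1) r + ε₀ * Dv (etd) (fun s => G 2 s * a s 2) r + -(1/μ₀) * Dv (exd 1) (fun s => C 0 s * a s 2) r) + ∫ r in U, (1/μ₀) * Dv (exd 2) (fun s => C 0 s * a s 1) r :=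
      MeasureTheory.integral_add s3 i4
    have e3 : ∫ r in U, (ε₀ * Dv (etd) (fun s => G 0 s * a s 0) r + ε₀ * Dv (etd) (fun s => G 1 s * a s 1) r + ε₀ * Dv (etd) (fun s => G 2 s * a s 2) r + -(1/μ₀) * Dv (exd 1) (fun s => C 0 s * a s 2) r)
        = (∫ r in U, ε₀ * Dv (etd) (fun s => G 0 s * a s 0) r + ε₀ * Dv (etd) (fun s => G 1 s * a s 1) r + ε₀ * Dv (etd) (fun s => G 2 s * a s 2) r) + ∫ r in U, -(1/μ₀) * Dv (exd 1) (fun s => C 0 s * a s 2) r :=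
      MeasureTheory.integral_add s2 i3
    have e2 : ∫ r in U, (ε₀ * Dv (etd) (fun s => G 0 s * a s 0) r + ε₀ * Dv (etd) (fun s => G 1 s * a s 1) r + ε₀ * Dv (etd) (fun s => G 2 s * a s 2) r)
        = (∫ r in U, ε₀ * Dv (etd) (fun s => G 0 s * a s 0) r + ε₀ * Dv (etd) (fun s => G 1 s * a s 1) r) + ∫ r in U, ε₀ * Dv (etd) (fun s => G 2 s * a s 2) r :=
      MeasureTheory.integral_add s1 i2
    have e1 : ∫ r in U, (ε₀ * Dv (etd) (fun s => G 0 s * a s 0) r + ε₀ * Dv (etd) (fun s => G 1 s * a s 1) r)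
        = (∫ r in U, ε₀ * Dv (etd) (fun s => G 0 s * a s 0) r) + ∫ r in U, ε₀ * Dv (etd) (fun s => G 1 s * a s 1) r :=
      MeasureTheory.integral_add i0 i1
    have hsum : ∀ r : E4,
        q * n r * dot3 (u r) (a r)
          + ε₀ * dot3 (grad3 (fun y => φ (r.1, y)) r.2 + dt A r) (dt a r)
          - (1 / μ₀) * dot3 (curl3 (fun y => A (r.1, y)) r.2)
              (curl3 (fun y => a (r.1, y)) r.2)
        = (ε₀ * Dv (etd) (fun s => G 0 s * a s 0) r + ε₀ * Dv (etd) (fun s => G 1 s * a s 1) r + ε₀ * Dv (etd) (fun s => G 2 s * a s 2) r + -(1/μ₀) * Dv (exd 1) (fun s => C 0 s * a s 2) r + (1/μ₀) * Dv (exd 2) (fun s => C 0 s * a s 1) r + -(1/μ₀) * Dv (exd 2) (fun s => C 1 s * a s 0) r + (1/μ₀) * Dv (exd 0) (fun s => C 1 s * a s 2) r + -(1/μ₀) * Dv (exd 0) (fun s => C 2 s * a s 1) r + (1/μ₀) * Dv (exd 1) (fun s => C 2 s * a s 0) r) + dot3 (w r) (a r) := by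
      intro r
      have hda : ∀ i, dt a r i = Dv etd (fun s => a s i) r := dt_eq_Dv a ha r
      have hmulG : ∀ i, Dv etd (fun s => G i s * a s i) r
          = Dv etd (G i) r * a r i + G i r * Dv etd (fun s => a s i) r :=
        fun i => Dv_mul (hGs i) (hbs i) _ _
      have hmulC : ∀ (v : E4) (k j : Fin 3), Dv v (fun s => C k s * a s j) r
          = Dv v (C k) r * a r j + C k r * Dv v (fun s => a s j) r :=
        fun v k j => Dv_mul (hCs k) (hbs j) _ _
      rw [hcurlA r, curl3_slice a ha r]
      simp only [dot3, Fin.sum_univ_three, Matrix.cons_val_zero, Matrix.cons_val_one,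
        Matrix.head_cons, Matrix.cons_val_two, Matrix.tail_cons, hGapp, hda, hwv, hdtE,
        hcurlB, hmulG, hmulC]
      ring
    have h0 := hvar a ha hca hta
    rw [MeasureTheory.integral_congr_ae (Filter.Eventually.of_forall hsum)] at h0
    rw [e9, e8, e7, e6, e5, e4, e3, e2, e1, z0, z1, z2, z3, z4, z5, z6, z7, z8] at h0
    simpa using h0
  have haei : ∀ i : Fin 3, ∀ᵐ r : E4, r ∈ U → w r i = 0 := by
    intro i
    refine hUo.ae_eq_zero_of_integral_contDiff_smul_eq_zero
      (((continuous_apply i).comp hwc).locallyIntegrable.locallyIntegrableOn U) ?_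
    intro g hg hgc hgt
    set a : E4 → V3 := fun r j => g r * (Pi.single i 1 : V3) j with hadef
    have has : ContDiff ℝ (⊤:ℕ∞) a := contDiff_pi.mpr fun j => hg.mul contDiff_const
    have hsup_sub : Function.support a ⊆ Function.support g := by
      intro r hr
      by_contra h0
      simp only [Function.mem_support, not_not] at h0
      exact hr (funext fun j => by simp [hadef, h0])
    have hasup : HasCompactSupport a := hgc.mono' (hsup_sub.trans subset_closure)
    have hat : tsupport a ⊆ U := (closure_mono hsup_sub).trans hgt
    have hkey := key a has hasup hat
    have hdot : ∀ r, dot3 (w r) (a r) = g r * w r i := by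
      intro r
      have hj : ∀ j : Fin 3, w r j * (g r * (Pi.single i 1 : V3) j)
          = if j = i then g r * w r i else 0 := by
        intro j
        by_cases h : j = i <;> simp [h, Pi.single_apply, mul_comm]
      calc dot3 (w r) (a r) = ∑ j, if j = i then g r * w r i else 0 := by
            simp only [dot3, hadef]
            exact Finset.sum_congr rfl fun j _ => hj j
        _ = g r * w r i := by simp
    rw [show (fun x : E4 => g x • w x i) = fun x => dot3 (w x) (a x) from
      funext fun x => by rw [hdot x, smul_eq_mul],
      ← MeasureTheory.setIntegral_eq_integral_of_forall_compl_eq_zero (s := U) (fun x hx => by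
        rw [hdot x, image_eq_zero_of_notMem_tsupport (fun hmem => hx (hgt hmem)), zero_mul])]
    exact hkey
  have hae : ∀ᵐ r : E4, r ∈ U → w r = 0 := by
    filter_upwards [(MeasureTheory.ae_all_iff).mpr haei] with r hr hrU
    funext i
    simpa using hr i hrU
  intro p hp
  have hwp : w p = 0 := by
    by_contra hne
    have hopen : IsOpen {r : E4 | r ∈ U ∧ w r ≠ 0} := by
      have hset : {r : E4 | r ∈ U ∧ w r ≠ 0} = U ∩ w ⁻¹' ({0}ᶜ) := rfl
      rw [hset]
      exact hUo.inter (isOpen_compl_singleton.preimage hwc)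
    have hz : volume {r : E4 | r ∈ U ∧ w r ≠ 0} = 0 := by
      refine measure_mono_null ?_ ((MeasureTheory.ae_iff (p := fun r => r ∈ U → w r = 0)).mp hae)
      intro r hr
      simp only [Set.mem_setOf_eq] at hr ⊢
      exact fun himp => hr.2 (himp hr.1)
    exact absurd hz (hopen.measure_pos volume ⟨p, hp, hne⟩).ne'
  have hfin : ε₀ • dt E p - ((1/μ₀) • curl3 (fun y => B (p.1, y)) p.2 - (q * n p) • u p) = 0 := by
    rw [hwdef] at hwp
    exact hwp
  exact sub_eq_zero.mp hfin


end
end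

section
/- Electron momentum equation in the simplified Hall-MHD variational principle (Theorem 3.2). Let Ω ⊆ ℝ³ be open, T > 0, q ∈ ℝ. Let u_i, u_e, A : (0,T) × Ω → ℝ³ and n : (0,T) × Ω → ℝ be smooth, and assume ∂_t n + div(n u_i) = 0 and div(n u_i) = div(n u_e) on (0,T) × Ω. Assume that for every smooth vector field v : (0,T) × Ω → ℝ³ with compact support in (0,T) × Ω one has ∫∫ q n A·(∂_t v + [u_e,v]) dx dt = 0. Then on (0,T) × Ω: q n ( ∂_t A + ∇(A·u_e) − u_e × (∇×A) ) = 0; that is, q n (E + u_e × B) = 0 with E := −∂_t A − ∇(A·u_e) and B := ∇×A. -/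
open MeasureTheory

noncomputable section

namespace HallAux

open Function

instance haar4 : (volume : Measure (ℝ × V3)).IsAddHaarMeasure :=
  inferInstanceAs (((volume : Measure ℝ).prod volume).IsAddHaarMeasure)

theorem cdiff {f : ℝ × V3 → ℝ} (hf : ContDiff ℝ (⊤ : ℕ∞) f) (p : ℝ × V3) :
    DifferentiableAt ℝ f p := (hf.differentiable (by simp)).differentiableAt

theorem cdiffV {f : ℝ × V3 → V3} (hf : ContDiff ℝ (⊤ : ℕ∞) f) (p : ℝ × V3) :
    DifferentiableAt ℝ f p := (hf.differentiable (by simp)).differentiableAt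

theorem comp3 {f : ℝ × V3 → V3} (hf : ContDiff ℝ (⊤ : ℕ∞) f) (i : Fin 3) :
    ContDiff ℝ (⊤ : ℕ∞) (fun z => f z i) := contDiff_pi.1 hf i

section DerivConv

variable {E : Type*} [NormedAddCommGroup E] [NormedSpace ℝ E]

theorem dt_eq {f : ℝ × V3 → E} {p : ℝ × V3} (hf : DifferentiableAt ℝ f p) :
    dt f p = fderiv ℝ f p (1, 0) := by
  have h1 : HasDerivAt (fun τ : ℝ => (τ, p.2) : ℝ → ℝ × V3) (1, (0 : V3)) p.1 :=
    (hasDerivAt_id p.1).prodMk (hasDerivAt_const _ _)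
  have h2 : HasFDerivAt f (fderiv ℝ f p) ((fun τ : ℝ => (τ, p.2)) p.1) := by
    simpa using hf.hasFDerivAt
  exact (h2.comp_hasDerivAt p.1 h1).deriv

end DerivConv

theorem fderiv_space {f : ℝ × V3 → ℝ} {p : ℝ × V3} (hf : DifferentiableAt ℝ f p) (w : V3) :
    fderiv ℝ (fun y => f (p.1, y)) p.2 w = fderiv ℝ f p (0, w) := by
  have h1 : HasFDerivAt (fun y : V3 => ((p.1, y) : ℝ × V3))
      (ContinuousLinearMap.inr ℝ ℝ V3) p.2 := by
    simpa using ((ContinuousLinearMap.inr ℝ ℝ V3).hasFDerivAt (x := p.2)).const_add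
      ((p.1, (0:V3)) : ℝ × V3)
  have h2 : HasFDerivAt f (fderiv ℝ f p) ((fun y : V3 => ((p.1, y) : ℝ × V3)) p.2) := by
    simpa using hf.hasFDerivAt
  have h3 := (h2.comp p.2 h1).fderiv
  have h4 : fderiv ℝ (fun y => f (p.1, y)) p.2
      = (fderiv ℝ f p).comp (ContinuousLinearMap.inr ℝ ℝ V3) := h3
  rw [h4]; rfl

theorem pd_space {f : ℝ × V3 → ℝ} {p : ℝ × V3} (hf : DifferentiableAt ℝ f p) (j : Fin 3) :
    pd j (fun y => f (p.1, y)) p.2 = fderiv ℝ f p (0, Pi.single j 1) :=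
  fderiv_space hf _

theorem fderiv_dir_sum {f : ℝ × V3 → ℝ} {p : ℝ × V3} (w : V3) :
    fderiv ℝ f p (0, w) = ∑ j, w j * fderiv ℝ f p (0, Pi.single j 1) := by
  have hs : ∀ j : Fin 3, w j • (Pi.single j 1 : V3) = Pi.single j (w j) := by
    intro j; ext k; simp [Pi.single_apply, mul_ite]
  have hw : (((0 : ℝ), w) : ℝ × V3) = ∑ j, w j • (((0:ℝ), Pi.single j 1) : ℝ × V3) := by
    ext
    · simp [Prod.fst_sum]
    · simp only [Prod.snd_sum, Prod.smul_mk, hs]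
      rw [Finset.univ_sum_single w]
  rw [hw, map_sum]
  congr 1; ext j
  rw [_root_.map_smul]; simp [smul_eq_mul]

theorem fderiv_pi_comp {f : ℝ × V3 → V3} {p : ℝ × V3} (hf : DifferentiableAt ℝ f p)
    (i : Fin 3) (w : ℝ × V3) :
    fderiv ℝ (fun z => f z i) p w = fderiv ℝ f p w i := by
  have h := ((ContinuousLinearMap.proj (R := ℝ) (φ := fun _ : Fin 3 => ℝ) i).hasFDerivAt.comp
    p hf.hasFDerivAt).fderiv
  have h2 : fderiv ℝ (fun z => f z i) p
      = (ContinuousLinearMap.proj (R := ℝ) (φ := fun _ : Fin 3 => ℝ) i).comp (fderiv ℝ f p) := h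
  rw [h2]; rfl

theorem dt_comp {f : ℝ × V3 → V3} (hf : ContDiff ℝ (⊤ : ℕ∞) f) (p : ℝ × V3) (i : Fin 3) :
    dt f p i = fderiv ℝ (fun z => f z i) p (1, 0) := by
  rw [dt_eq (cdiffV hf p), fderiv_pi_comp (cdiffV hf p)]

theorem ibp_zero {f : ℝ × V3 → ℝ} (hf : ContDiff ℝ (⊤ : ℕ∞) f)
    (hc : HasCompactSupport f) (w : ℝ × V3) :
    ∫ p, fderiv ℝ f p w = 0 := by
  obtain ⟨C, hC⟩ := hf.lipschitzWith_of_hasCompactSupport hc (by simp)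
  have h1 : LipschitzWith 0 (fun _ : ℝ × V3 => (1 : ℝ)) := LipschitzWith.const _
  have key := LipschitzWith.integral_lineDeriv_mul_eq (μ := volume) h1 hC hc (-w)
  have hconst : ∀ (x : ℝ × V3) (u : ℝ × V3), lineDeriv ℝ (fun _ : ℝ × V3 => (1:ℝ)) x u = 0 := by
    intro x u; simp [lineDeriv]
  simp only [hconst, zero_mul, integral_zero, neg_neg, mul_one] at key
  have h2 : ∀ p, lineDeriv ℝ f p w = fderiv ℝ f p w := fun p =>
    ((hf.differentiable (by simp)) p).lineDeriv_eq_fderiv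
  rw [← integral_congr_ae (Filter.Eventually.of_forall h2)]
  exact key.symm

theorem fd_add {f g : ℝ × V3 → ℝ} (hf : ContDiff ℝ (⊤ : ℕ∞) f) (hg : ContDiff ℝ (⊤ : ℕ∞) g)
    (p w : ℝ × V3) : fderiv ℝ (fun z => f z + g z) p w = fderiv ℝ f p w + fderiv ℝ g p w := by
  rw [fderiv_fun_add (cdiff hf p) (cdiff hg p)]; simp

theorem fd_mul {f g : ℝ × V3 → ℝ} (hf : ContDiff ℝ (⊤ : ℕ∞) f) (hg : ContDiff ℝ (⊤ : ℕ∞) g)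
    (p w : ℝ × V3) :
    fderiv ℝ (fun z => f z * g z) p w = f p * fderiv ℝ g p w + g p * fderiv ℝ f p w := by
  rw [fderiv_fun_mul (cdiff hf p) (cdiff hg p)]; simp [smul_eq_mul]

theorem fd_cmul {f : ℝ × V3 → ℝ} (hf : ContDiff ℝ (⊤ : ℕ∞) f) (c : ℝ) (p w : ℝ × V3) :
    fderiv ℝ (fun z => c * f z) p w = c * fderiv ℝ f p w := by
  rw [fderiv_const_mul (cdiff hf p)]; simp

theorem fd_dot {A v : ℝ × V3 → V3} (hA : ContDiff ℝ (⊤ : ℕ∞) A) (hv : ContDiff ℝ (⊤ : ℕ∞) v)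
    (p w : ℝ × V3) :
    fderiv ℝ (fun z => ∑ i, A z i * v z i) p w
      = ∑ i, (A p i * fderiv ℝ (fun z => v z i) p w + v p i * fderiv ℝ (fun z => A z i) p w) := by
  have h3 : (fun z : ℝ × V3 => ∑ i, A z i * v z i)
      = fun z => A z 0 * v z 0 + A z 1 * v z 1 + A z 2 * v z 2 := by
    funext z; rw [Fin.sum_univ_three]
  rw [h3,
    fd_add (((comp3 hA 0).mul (comp3 hv 0)).add ((comp3 hA 1).mul (comp3 hv 1)))
      ((comp3 hA 2).mul (comp3 hv 2)),
    fd_add ((comp3 hA 0).mul (comp3 hv 0)) ((comp3 hA 1).mul (comp3 hv 1)),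
    fd_mul (comp3 hA 0) (comp3 hv 0), fd_mul (comp3 hA 1) (comp3 hv 1),
    fd_mul (comp3 hA 2) (comp3 hv 2), Fin.sum_univ_three]

/-- Fundamental lemma of the calculus of variations, vector version. -/
theorem flcv {S : Set (ℝ × V3)} (hS : IsOpen S) {W : ℝ × V3 → V3} (hW : Continuous W)
    (h : ∀ v : ℝ × V3 → V3, ContDiff ℝ (⊤ : ℕ∞) v → HasCompactSupport v → tsupport v ⊆ S →
      (∫ p, dot3 (W p) (v p)) = 0) :
    ∀ p ∈ S, W p = 0 := by
  have comp : ∀ i : Fin 3, ∀ p ∈ S, W p i = 0 := by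
    intro i
    have hWi : Continuous (fun p => W p i) := (continuous_apply i).comp hW
    have hloc : MeasureTheory.LocallyIntegrableOn (fun p => W p i) S volume :=
      hWi.locallyIntegrable.locallyIntegrableOn S
    have key := hS.ae_eq_zero_of_integral_contDiff_smul_eq_zero (μ := volume)
      (f := fun p => W p i) hloc ?_
    · have hae : (fun p => W p i) =ᵐ[volume.restrict S] (fun _ => (0:ℝ)) := by
        refine (MeasureTheory.ae_restrict_iff' hS.measurableSet).2 ?_
        filter_upwards [key] with p hp hpS using hp hpS
      have heq := MeasureTheory.Measure.eqOn_of_ae_eq hae hWi.continuousOn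
        continuousOn_const (by rw [hS.interior_eq]; exact subset_closure)
      exact fun p hp => heq hp
    · intro g hg hgc hgs
      have hsupp : Function.support (fun p => g p • (Pi.single i 1 : V3))
          ⊆ Function.support g := by
        intro p hp
        simp only [Function.mem_support, ne_eq] at hp ⊢
        intro h0; exact hp (by rw [h0, zero_smul])
      have hvg : ContDiff ℝ (⊤ : ℕ∞) (fun p => g p • (Pi.single i 1 : V3)) :=
        hg.smul contDiff_const
      have hvc : HasCompactSupport (fun p => g p • (Pi.single i 1 : V3)) :=
        HasCompactSupport.of_support_subset_isCompact hgc
          (hsupp.trans (subset_tsupport g))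
      have hint := h _ hvg hvc ((closure_mono hsupp).trans hgs)
      rw [← hint]
      congr 1; funext p
      have : dot3 (W p) (g p • (Pi.single i 1 : V3)) = g p * W p i := by
        simp [dot3, Pi.single_apply, mul_ite, mul_comm]
      rw [this, smul_eq_mul]
  intro p hp; funext i; exact comp i p hp

/-- The Euler–Lagrange density for the electron momentum equation. -/
def Wv (q : ℝ) (n : ℝ × V3 → ℝ) (ue A : ℝ × V3 → V3) (p : ℝ × V3) : V3 :=
  fun i => -(q * n p) * (fderiv ℝ (fun z => A z i) p (1, 0)
    + (∑ j, ue p j * fderiv ℝ (fun z => A z i) p (0, Pi.single j 1))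
    + (∑ k, fderiv ℝ (fun z => ue z k) p (0, Pi.single i 1) * A p k))

theorem Wv_continuous (q : ℝ) {n : ℝ × V3 → ℝ} {ue A : ℝ × V3 → V3}
    (hn : ContDiff ℝ (⊤ : ℕ∞) n) (hue : ContDiff ℝ (⊤ : ℕ∞) ue)
    (hA : ContDiff ℝ (⊤ : ℕ∞) A) : Continuous (Wv q n ue A) := by
  have hfd : ∀ (f : ℝ × V3 → ℝ), ContDiff ℝ (⊤ : ℕ∞) f → ∀ w : ℝ × V3,
      Continuous (fun p => fderiv ℝ f p w) := by
    intro f hf w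
    exact (hf.continuous_fderiv (by simp)).clm_apply continuous_const
  refine continuous_pi fun i => ?_
  refine Continuous.mul ?_ ?_
  · exact (continuous_const.mul hn.continuous).neg
  · refine Continuous.add (Continuous.add ?_ ?_) ?_
    · exact hfd _ (comp3 hA i) _
    · exact continuous_finset_sum _ fun j _ =>
        ((continuous_apply j).comp hue.continuous).mul (hfd _ (comp3 hA i) _)
    · exact continuous_finset_sum _ fun k _ =>
        (hfd _ (comp3 hue k) _).mul ((continuous_apply k).comp hA.continuous)

theorem test_integral (q : ℝ) (n : ℝ × V3 → ℝ) (ue A : ℝ × V3 → V3)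
    (hn : ContDiff ℝ (⊤ : ℕ∞) n) (hue : ContDiff ℝ (⊤ : ℕ∞) ue) (hA : ContDiff ℝ (⊤ : ℕ∞) A)
    (S : Set (ℝ × V3))
    (hG0 : ∀ p ∈ S, fderiv ℝ n p ((1:ℝ), (0:V3))
      + ∑ j, fderiv ℝ (fun z => n z * ue z j) p (0, Pi.single j 1) = 0)
    (v : ℝ × V3 → V3) (hv : ContDiff ℝ (⊤ : ℕ∞) v) (hvc : HasCompactSupport v)
    (hvs : tsupport v ⊆ S)
    (hvar0 : (∫ p in S, q * n p * dot3 (A p)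
      (dt v p + lie3 (fun y => ue (p.1, y)) (fun y => v (p.1, y)) p.2)) = 0) :
    (∫ p, dot3 (Wv q n ue A p) (v p)) = 0 := by
  have hs : ContDiff ℝ (⊤ : ℕ∞) (fun z : ℝ × V3 => ∑ i, A z i * v z i) :=
    ContDiff.sum fun i _ => (comp3 hA i).mul (comp3 hv i)
  have hH : ContDiff ℝ (⊤ : ℕ∞) (fun z : ℝ × V3 => q * (n z * ∑ i, A z i * v z i)) :=
    contDiff_const.mul (hn.mul hs)
  have hK : ∀ j : Fin 3, ContDiff ℝ (⊤ : ℕ∞)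
      (fun z : ℝ × V3 => q * (n z * ue z j * ∑ i, A z i * v z i)) :=
    fun j => contDiff_const.mul ((hn.mul (comp3 hue j)).mul hs)
  -- the pointwise identity
  have hident : ∀ p : ℝ × V3, q * n p * dot3 (A p)
      (dt v p + lie3 (fun y => ue (p.1, y)) (fun y => v (p.1, y)) p.2)
    = fderiv ℝ (fun z => q * (n z * ∑ i, A z i * v z i)) p ((1:ℝ), (0:V3))
      + (∑ j, fderiv ℝ (fun z => q * (n z * ue z j * ∑ i, A z i * v z i)) p (0, Pi.single j 1))
      - (fderiv ℝ n p ((1:ℝ), (0:V3))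
          + ∑ j, fderiv ℝ (fun z => n z * ue z j) p (0, Pi.single j 1))
        * (q * ∑ i, A p i * v p i)
      + dot3 (Wv q n ue A p) (v p) := by
    intro p
    have hdt : ∀ i : Fin 3, dt v p i = fderiv ℝ (fun z => v z i) p ((1:ℝ), (0:V3)) :=
      dt_comp hv p
    have hjv : ∀ i : Fin 3, fderiv ℝ (fun y => v (p.1, y) i) p.2 (ue p)
        = ∑ j, ue p j * fderiv ℝ (fun z => v z i) p (0, Pi.single j 1) := by
      intro i
      have h1 : fderiv ℝ (fun y => v (p.1, y) i) p.2 (ue p)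
          = fderiv ℝ (fun z => v z i) p (0, ue p) :=
        fderiv_space (f := fun z => v z i) (cdiff (comp3 hv i) p) (ue p)
      rw [h1]; exact fderiv_dir_sum _
    have hju : ∀ i : Fin 3, fderiv ℝ (fun y => ue (p.1, y) i) p.2 (v p)
        = ∑ j, v p j * fderiv ℝ (fun z => ue z i) p (0, Pi.single j 1) := by
      intro i
      have h1 : fderiv ℝ (fun y => ue (p.1, y) i) p.2 (v p)
          = fderiv ℝ (fun z => ue z i) p (0, v p) :=
        fderiv_space (f := fun z => ue z i) (cdiff (comp3 hue i) p) (v p)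
      rw [h1]; exact fderiv_dir_sum _
    have e1a : fderiv ℝ (fun z => q * (n z * ∑ i, A z i * v z i)) p ((1:ℝ), (0:V3))
        = q * fderiv ℝ (fun z => n z * ∑ i, A z i * v z i) p ((1:ℝ), (0:V3)) :=
      fd_cmul (hn.mul hs) q p _
    have e1b : fderiv ℝ (fun z => n z * ∑ i, A z i * v z i) p ((1:ℝ), (0:V3))
        = n p * fderiv ℝ (fun z => ∑ i, A z i * v z i) p ((1:ℝ), (0:V3))
          + (∑ i, A p i * v p i) * fderiv ℝ n p ((1:ℝ), (0:V3)) :=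
      fd_mul hn hs p _
    have e1c := fd_dot hA hv p ((1:ℝ), (0:V3))
    have e2a : ∀ j : Fin 3,
        fderiv ℝ (fun z => q * (n z * ue z j * ∑ i, A z i * v z i)) p (0, Pi.single j 1)
        = q * fderiv ℝ (fun z => n z * ue z j * ∑ i, A z i * v z i) p (0, Pi.single j 1) :=
      fun j => fd_cmul ((hn.mul (comp3 hue j)).mul hs) q p _
    have e2b : ∀ j : Fin 3,
        fderiv ℝ (fun z => n z * ue z j * ∑ i, A z i * v z i) p (0, Pi.single j 1)
        = (n p * ue p j) * fderiv ℝ (fun z => ∑ i, A z i * v z i) p (0, Pi.single j 1)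
          + (∑ i, A p i * v p i) * fderiv ℝ (fun z => n z * ue z j) p (0, Pi.single j 1) :=
      fun j => fd_mul (hn.mul (comp3 hue j)) hs p _
    have e2c : ∀ j : Fin 3, fderiv ℝ (fun z => n z * ue z j) p (0, Pi.single j 1)
        = n p * fderiv ℝ (fun z => ue z j) p (0, Pi.single j 1)
          + ue p j * fderiv ℝ n p (0, Pi.single j 1) :=
      fun j => fd_mul hn (comp3 hue j) p _
    have e2d : ∀ j : Fin 3, fderiv ℝ (fun z : ℝ × V3 => ∑ i, A z i * v z i) p (0, Pi.single j 1)
        = ∑ i, (A p i * fderiv ℝ (fun z => v z i) p (0, Pi.single j 1)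
            + v p i * fderiv ℝ (fun z => A z i) p (0, Pi.single j 1)) :=
      fun j => fd_dot hA hv p _
    simp only [dot3, lie3, jac, Pi.add_apply, Pi.sub_apply, Prod.mk.eta, hdt, hjv, hju,
      e1a, e1b, e1c, e2a, e2b, e2c, e2d, Wv]
    simp only [Fin.sum_univ_three]
    ring
  -- vanishing of the integrand off S
  have hsupp_v : ∀ p, p ∉ S → v p = 0 := fun p hp =>
    image_eq_zero_of_notMem_tsupport (fun h => hp (hvs h))
  have hFzero : ∀ p, p ∉ S → q * n p * dot3 (A p)
      (dt v p + lie3 (fun y => ue (p.1, y)) (fun y => v (p.1, y)) p.2) = 0 := by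
    intro p hp
    have hp' : p ∉ tsupport v := fun h => hp (hvs h)
    have hnb : ∀ᶠ z in nhds p, v z = 0 := by
      filter_upwards [(isClosed_tsupport v).isOpen_compl.mem_nhds hp'] with z hz using
        image_eq_zero_of_notMem_tsupport hz
    have hdt0 : dt v p = 0 := by
      have hcurve : Filter.Tendsto (fun τ : ℝ => ((τ, p.2) : ℝ × V3)) (nhds p.1) (nhds p) := by
        have h := (continuous_id.prodMk continuous_const :
          Continuous fun τ : ℝ => ((τ, p.2) : ℝ × V3)).tendsto p.1
        simpa using h
      have h1 : (fun τ => v (τ, p.2)) =ᶠ[nhds p.1] (fun _ => (0 : V3)) := hcurve.eventually hnb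
      show deriv (fun τ => v (τ, p.2)) p.1 = 0
      rw [h1.deriv_eq]; exact deriv_const _ _
    have hcurve2 : Filter.Tendsto (fun y : V3 => ((p.1, y) : ℝ × V3)) (nhds p.2) (nhds p) := by
      have h := (continuous_const.prodMk continuous_id :
        Continuous fun y : V3 => ((p.1, y) : ℝ × V3)).tendsto p.2
      simpa using h
    have hsf : ∀ i : Fin 3, fderiv ℝ (fun y => v (p.1, y) i) p.2 = 0 := by
      intro i
      have h1 : (fun y => v (p.1, y) i) =ᶠ[nhds p.2] (fun _ => (0 : ℝ)) := by
        filter_upwards [hcurve2.eventually hnb] with y hy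
        rw [hy]; rfl
      rw [h1.fderiv_eq]; exact fderiv_const_apply 0
    have hvec : ∀ i : Fin 3,
        (dt v p + lie3 (fun y => ue (p.1, y)) (fun y => v (p.1, y)) p.2) i = 0 := by
      intro i
      simp only [Pi.add_apply, lie3, Pi.sub_apply, jac, Prod.mk.eta, hdt0, hsf,
        hsupp_v p hp]
      simp
    have : dot3 (A p) (dt v p + lie3 (fun y => ue (p.1, y)) (fun y => v (p.1, y)) p.2) = 0 := by
      simp [dot3, hvec]
    rw [this, mul_zero]
  -- compact-support and integrability facts
  have hcs_of : ∀ f : ℝ × V3 → ℝ, (∀ p, v p = 0 → f p = 0) → HasCompactSupport f := by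
    intro f hf
    refine HasCompactSupport.of_support_subset_isCompact hvc ?_
    intro p hp
    refine subset_tsupport v ?_
    simp only [Function.mem_support, ne_eq] at hp ⊢
    intro h0; exact hp (hf p h0)
  have hH_cs : HasCompactSupport (fun z : ℝ × V3 => q * (n z * ∑ i, A z i * v z i)) :=
    hcs_of _ (fun p h0 => by simp [h0])
  have hK_cs : ∀ j : Fin 3, HasCompactSupport
      (fun z : ℝ × V3 => q * (n z * ue z j * ∑ i, A z i * v z i)) :=
    fun j => hcs_of _ (fun p h0 => by simp [h0])
  have hfdcs : ∀ (f : ℝ × V3 → ℝ), HasCompactSupport f → ∀ w : ℝ × V3,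
      HasCompactSupport (fun p => fderiv ℝ f p w) := by
    intro f hf w
    refine HasCompactSupport.of_support_subset_isCompact (hf.fderiv ℝ) ?_
    intro p hp
    refine subset_tsupport (fderiv ℝ f) ?_
    simp only [Function.mem_support, ne_eq] at hp ⊢
    intro h0; apply hp; rw [h0]; rfl
  have hfdcont : ∀ (f : ℝ × V3 → ℝ), ContDiff ℝ (⊤ : ℕ∞) f → ∀ w : ℝ × V3,
      Continuous (fun p => fderiv ℝ f p w) := by
    intro f hf w
    exact (hf.continuous_fderiv (by simp)).clm_apply continuous_const
  have hXi : MeasureTheory.Integrable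
      (fun p => fderiv ℝ (fun z => q * (n z * ∑ i, A z i * v z i)) p ((1:ℝ), (0:V3))) :=
    (hfdcont _ hH _).integrable_of_hasCompactSupport (hfdcs _ hH_cs _)
  have hYji : ∀ j : Fin 3, MeasureTheory.Integrable
      (fun p => fderiv ℝ (fun z => q * (n z * ue z j * ∑ i, A z i * v z i)) p
        (0, Pi.single j 1)) :=
    fun j => (hfdcont _ (hK j) _).integrable_of_hasCompactSupport (hfdcs _ (hK_cs j) _)
  have hYi : MeasureTheory.Integrable (fun p => ∑ j : Fin 3,
      fderiv ℝ (fun z => q * (n z * ue z j * ∑ i, A z i * v z i)) p (0, Pi.single j 1)) :=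
    MeasureTheory.integrable_finset_sum _ (fun j _ => hYji j)
  have hZcont : Continuous (fun p => dot3 (Wv q n ue A p) (v p)) := by
    have : (fun p => dot3 (Wv q n ue A p) (v p))
        = fun p => ∑ i, Wv q n ue A p i * v p i := rfl
    rw [this]
    exact continuous_finset_sum _ fun i _ =>
      (((continuous_apply i).comp (Wv_continuous q hn hue hA)).mul
        ((continuous_apply i).comp hv.continuous))
  have hZi : MeasureTheory.Integrable (fun p => dot3 (Wv q n ue A p) (v p)) :=
    hZcont.integrable_of_hasCompactSupport (hcs_of _ (fun p h0 => by simp [dot3, h0]))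
  -- the G-term vanishes identically
  have hGzero : ∀ p : ℝ × V3, (fderiv ℝ n p ((1:ℝ), (0:V3))
      + ∑ j, fderiv ℝ (fun z => n z * ue z j) p (0, Pi.single j 1))
      * (q * ∑ i, A p i * v p i) = 0 := by
    intro p
    by_cases hp : p ∈ S
    · rw [hG0 p hp, zero_mul]
    · have hvp := hsupp_v p hp
      rw [hvp]; simp
  have hF : ∀ p : ℝ × V3, q * n p * dot3 (A p)
      (dt v p + lie3 (fun y => ue (p.1, y)) (fun y => v (p.1, y)) p.2)
      = fderiv ℝ (fun z => q * (n z * ∑ i, A z i * v z i)) p ((1:ℝ), (0:V3))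
        + (∑ j, fderiv ℝ (fun z => q * (n z * ue z j * ∑ i, A z i * v z i)) p
            (0, Pi.single j 1))
        + dot3 (Wv q n ue A p) (v p) := by
    intro p
    rw [hident p, hGzero p]; ring
  have e0 : (∫ p in S, q * n p * dot3 (A p)
      (dt v p + lie3 (fun y => ue (p.1, y)) (fun y => v (p.1, y)) p.2))
      = ∫ p, q * n p * dot3 (A p)
        (dt v p + lie3 (fun y => ue (p.1, y)) (fun y => v (p.1, y)) p.2) :=
    MeasureTheory.setIntegral_eq_integral_of_forall_compl_eq_zero hFzero
  have e1 : (∫ p, q * n p * dot3 (A p)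
      (dt v p + lie3 (fun y => ue (p.1, y)) (fun y => v (p.1, y)) p.2))
      = (∫ p, fderiv ℝ (fun z => q * (n z * ∑ i, A z i * v z i)) p ((1:ℝ), (0:V3)))
        + (∫ p, ∑ j : Fin 3, fderiv ℝ (fun z => q * (n z * ue z j * ∑ i, A z i * v z i)) p
            (0, Pi.single j 1))
        + ∫ p, dot3 (Wv q n ue A p) (v p) := by
    have hXYi : MeasureTheory.Integrable (fun p =>
        fderiv ℝ (fun z => q * (n z * ∑ i, A z i * v z i)) p ((1:ℝ), (0:V3))
        + ∑ j : Fin 3, fderiv ℝ (fun z => q * (n z * ue z j * ∑ i, A z i * v z i)) p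
            (0, Pi.single j 1)) := hXi.add hYi
    rw [MeasureTheory.integral_congr_ae (Filter.Eventually.of_forall hF),
      MeasureTheory.integral_add hXYi hZi, MeasureTheory.integral_add hXi hYi]
  have eX : (∫ p, fderiv ℝ (fun z => q * (n z * ∑ i, A z i * v z i)) p ((1:ℝ), (0:V3))) = 0 :=
    ibp_zero hH hH_cs _
  have eY : (∫ p, ∑ j : Fin 3, fderiv ℝ (fun z => q * (n z * ue z j * ∑ i, A z i * v z i)) p
      (0, Pi.single j 1)) = 0 := by
    rw [MeasureTheory.integral_finset_sum _ (fun j _ => hYji j)]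
    exact Finset.sum_eq_zero fun j _ => ibp_zero (hK j) (hK_cs j) _
  rw [e0, e1, eX, eY] at hvar0
  linarith

end HallAux

/-- electron momentum equation in the simplified Hall-MHD
variational principle (with `φ = A·u_e`). -/
theorem simplified_electron_momentum_from_variations
    (Ω : Set V3) (hΩ : IsOpen Ω) (T : ℝ) (hT : 0 < T) (q : ℝ)
    (ui ue A : ℝ × V3 → V3) (n : ℝ × V3 → ℝ)
    (hui : ContDiff ℝ (⊤ : ℕ∞) ui) (hue : ContDiff ℝ (⊤ : ℕ∞) ue)
    (hA : ContDiff ℝ (⊤ : ℕ∞) A) (hn : ContDiff ℝ (⊤ : ℕ∞) n)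
    (hadv : ∀ p ∈ Set.Ioo 0 T ×ˢ Ω,
      dt n p + div3 (fun y => n (p.1, y) • ui (p.1, y)) p.2 = 0)
    (hdiv : ∀ p ∈ Set.Ioo 0 T ×ˢ Ω,
      div3 (fun y => n (p.1, y) • ui (p.1, y)) p.2
        = div3 (fun y => n (p.1, y) • ue (p.1, y)) p.2)
    (hvar : ∀ v : ℝ × V3 → V3, ContDiff ℝ (⊤ : ℕ∞) v → HasCompactSupport v →
      tsupport v ⊆ Set.Ioo 0 T ×ˢ Ω →
      (∫ p in Set.Ioo 0 T ×ˢ Ω,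
        q * n p * dot3 (A p)
          (dt v p + lie3 (fun y => ue (p.1, y)) (fun y => v (p.1, y)) p.2)) = 0)
    (E B : ℝ × V3 → V3)
    (hE : ∀ p : ℝ × V3, E p = -dt A p
      - grad3 (fun y => dot3 (A (p.1, y)) (ue (p.1, y))) p.2)
    (hB : ∀ p : ℝ × V3, B p = curl3 (fun y => A (p.1, y)) p.2) :
    ∀ p ∈ Set.Ioo 0 T ×ˢ Ω,
      (q * n p) • (dt A p
          + grad3 (fun y => dot3 (A (p.1, y)) (ue (p.1, y))) p.2
          - crossProduct (ue p) (curl3 (fun y => A (p.1, y)) p.2)) = 0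
      ∧ (q * n p) • (E p + crossProduct (ue p) (B p)) = 0 := by
  classical
  set S : Set (ℝ × V3) := Set.Ioo 0 T ×ˢ Ω with hSdef
  have hS : IsOpen S := isOpen_Ioo.prod hΩ
  -- the continuity-equation input for `test_integral`
  have hG0 : ∀ p ∈ S, fderiv ℝ n p ((1:ℝ), (0:V3))
      + ∑ j, fderiv ℝ (fun z => n z * ue z j) p (0, Pi.single j 1) = 0 := by
    intro p hp
    have hdtn : dt n p = fderiv ℝ n p ((1:ℝ), (0:V3)) := HallAux.dt_eq (HallAux.cdiff hn p)
    have hdui : div3 (fun y => n (p.1, y) • ui (p.1, y)) p.2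
        = ∑ j, fderiv ℝ (fun z => n z * ui z j) p (0, Pi.single j 1) := by
      refine Finset.sum_congr rfl fun j _ => ?_
      exact HallAux.pd_space (f := fun z => n z * ui z j)
        (HallAux.cdiff (hn.mul (HallAux.comp3 hui j)) p) j
    have hdue : div3 (fun y => n (p.1, y) • ue (p.1, y)) p.2
        = ∑ j, fderiv ℝ (fun z => n z * ue z j) p (0, Pi.single j 1) := by
      refine Finset.sum_congr rfl fun j _ => ?_
      exact HallAux.pd_space (f := fun z => n z * ue z j)
        (HallAux.cdiff (hn.mul (HallAux.comp3 hue j)) p) j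
    have h1 := hadv p hp
    have h2 := hdiv p hp
    rw [hdtn, hdui] at h1
    rw [hdui, hdue] at h2
    rw [← h2]
    linarith
  -- Euler–Lagrange: the density vanishes on S
  have hW0 : ∀ p ∈ S, HallAux.Wv q n ue A p = 0 :=
    HallAux.flcv hS (HallAux.Wv_continuous q hn hue hA) (fun v hv hvc hvs =>
      HallAux.test_integral q n ue A hn hue hA S hG0 v hv hvc hvs (hvar v hv hvc hvs))
  intro p hp
  -- component facts
  have hpdA : ∀ j k : Fin 3, pd j (fun y => A (p.1, y) k) p.2
      = fderiv ℝ (fun z => A z k) p (0, Pi.single j 1) :=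
    fun j k => HallAux.pd_space (f := fun z => A z k) (HallAux.cdiff (HallAux.comp3 hA k) p) j
  have hgrad : ∀ i : Fin 3, grad3 (fun y => dot3 (A (p.1, y)) (ue (p.1, y))) p.2 i
      = ∑ k, (A p k * fderiv ℝ (fun z => ue z k) p (0, Pi.single i 1)
          + ue p k * fderiv ℝ (fun z => A z k) p (0, Pi.single i 1)) := by
    intro i
    have h1 : pd i (fun y => dot3 (A (p.1, y)) (ue (p.1, y))) p.2
        = fderiv ℝ (fun z => ∑ k, A z k * ue z k) p (0, Pi.single i 1) :=
      HallAux.pd_space (f := fun z => ∑ k, A z k * ue z k)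
        (HallAux.cdiff (ContDiff.sum fun k _ =>
          (HallAux.comp3 hA k).mul (HallAux.comp3 hue k)) p) i
    show pd i (fun y => dot3 (A (p.1, y)) (ue (p.1, y))) p.2 = _
    rw [h1]
    exact HallAux.fd_dot hA hue p _
  have hWc : ∀ i : Fin 3, q * n p *
      (fderiv ℝ (fun z => A z i) p ((1:ℝ), (0:V3))
        + (∑ j, ue p j * fderiv ℝ (fun z => A z i) p (0, Pi.single j 1))
        + (∑ k, fderiv ℝ (fun z => ue z k) p (0, Pi.single i 1) * A p k)) = 0 := by
    intro i
    have := congrFun (hW0 p hp) i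
    simp only [HallAux.Wv, Pi.zero_apply, neg_mul] at this
    linarith
  -- the pointwise vector-calculus identity
  have hid2 : ∀ i : Fin 3,
      dt A p i + grad3 (fun y => dot3 (A (p.1, y)) (ue (p.1, y))) p.2 i
        - crossProduct (ue p) (curl3 (fun y => A (p.1, y)) p.2) i
      = fderiv ℝ (fun z => A z i) p ((1:ℝ), (0:V3))
        + (∑ j, ue p j * fderiv ℝ (fun z => A z i) p (0, Pi.single j 1))
        + (∑ k, fderiv ℝ (fun z => ue z k) p (0, Pi.single i 1) * A p k) := by
    intro i
    rw [HallAux.dt_comp hA p i, hgrad i, cross_apply]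
    simp only [curl3, hpdA]
    fin_cases i <;>
      simp [Fin.sum_univ_three, Matrix.cons_val_zero, Matrix.cons_val_one, Matrix.head_cons] <;>
      ring
  have hmain : (q * n p) • (dt A p
      + grad3 (fun y => dot3 (A (p.1, y)) (ue (p.1, y))) p.2
      - crossProduct (ue p) (curl3 (fun y => A (p.1, y)) p.2)) = 0 := by
    funext i
    simp only [Pi.smul_apply, Pi.add_apply, Pi.sub_apply, Pi.zero_apply, smul_eq_mul]
    rw [hid2 i]
    exact hWc i
  refine ⟨hmain, ?_⟩
  rw [hE p, hB p]
  have hveq : -dt A p - grad3 (fun y => dot3 (A (p.1, y)) (ue (p.1, y))) p.2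
      + crossProduct (ue p) (curl3 (fun y => A (p.1, y)) p.2)
      = -(dt A p + grad3 (fun y => dot3 (A (p.1, y)) (ue (p.1, y))) p.2
          - crossProduct (ue p) (curl3 (fun y => A (p.1, y)) p.2)) := by
    abel
  rw [hveq, smul_neg, hmain, neg_zero]

end
end
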